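/- Let α ≥ 2 be an integer and let C be a minimal d_α-D_α cut in A_α with C ≠ {d_α}. Let S ⊆ {1,…,α−1} be nonempty with d_S ∉ C, and suppose x_{T∪{α}} ∉ C for some nonempty T ⊆ {1,…,α−1}. Then x_R ∈ C for every R ⊆ {1,…,α−1} with R ∩ S ≠ ∅, R ∩ T ≠ ∅ and |R| ≥ 2. -/

import Mathlib

/-- Raw vertex names for the auxiliary graph `A_α`: the special vertex `top = d_α`,
vertices `d S`, and vertices `x S`. -/
inductive AV : Type where
  | top : AV
  | d : Finset ℕ → AV
  | x : Finset ℕ → AV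
deriving DecidableEq

/-- The vertices actually present in `A_α`: `d_α`; `d S` for nonempty
`S ⊆ {1, …, α-1}`; and `x S` for `S ⊆ {1, …, α}` with `|S| ≥ 2`. -/
def AValid (α : ℕ) : AV → Prop
  | AV.top => True
  | AV.d S => S.Nonempty ∧ S ⊆ Finset.Icc 1 (α - 1)
  | AV.x S => 2 ≤ S.card ∧ S ⊆ Finset.Icc 1 α

/-- One-sided adjacency for `A_α`: `d_α x_S` when `α ∈ S`; `d_S x_T` when
`S ∩ T ≠ ∅`; `x_S x_T` when `S ≠ T` and `S ∩ T ≠ ∅`. -/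
def AAdj (α : ℕ) : AV → AV → Prop
  | AV.top, AV.x S => α ∈ S
  | AV.d S, AV.x T => (S ∩ T).Nonempty
  | AV.x S, AV.x T => S ≠ T ∧ (S ∩ T).Nonempty
  | _, _ => False

/-- The auxiliary graph `A_α`, on the valid vertices. -/
def Agraph (α : ℕ) : SimpleGraph {v : AV // AValid α v} where
  Adj a b := AAdj α a.1 b.1 ∨ AAdj α b.1 a.1
  symm := ⟨fun _ _ h => Or.symm h⟩
  loopless := ⟨by
    rintro ⟨v, hv⟩ h
    rcases v with _ | S | S <;> simp only [AAdj] at h <;> tauto⟩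

/-- The vertex `d_α` of `A_α`. -/
def dTop (α : ℕ) : {v : AV // AValid α v} := ⟨AV.top, trivial⟩

/-- The set `D_α = {d_S : S ⊆ {1, …, α-1}, S ≠ ∅}` of vertices of `A_α`. -/
def Dset (α : ℕ) : Set {v : AV // AValid α v} := {v | ∃ S, v.1 = AV.d S}

/-- `C` is an `A`-`B` cut in `G`: the graph `G - C` (i.e. the subgraph of `G`
induced on `Cᶜ`) contains no path from `A \ C` to `B \ C`. -/
def IsCut {V : Type*} (G : SimpleGraph V) (A B C : Set V) : Prop :=
  ∀ (a b : ↥(Cᶜ : Set V)), (a : V) ∈ A → (b : V) ∈ B →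
    ¬ (G.induce (Cᶜ : Set V)).Reachable a b

/-- `C` is a minimal `A`-`B` cut in `G`. -/
def IsMinimalCut {V : Type*} (G : SimpleGraph V) (A B C : Set V) : Prop :=
  IsCut G A B C ∧ ∀ x ∈ C, ¬ IsCut G A B (C \ {x})

/-- Validity of the vertex `x_{S ∪ {α}}` for nonempty `S ⊆ {1, …, α-1}`. -/
lemma aValid_x_union (α : ℕ) (hα : 2 ≤ α) (S : Finset ℕ)
    (hS : S ⊆ Finset.Icc 1 (α - 1)) (hne : S.Nonempty) :
    AValid α (AV.x (S ∪ {α})) := by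
  have hαS : α ∉ S := by
    intro h
    have := (Finset.mem_Icc.1 (hS h)).2
    omega
  constructor
  · have hcard : (S ∪ {α}).card = S.card + 1 := by
      rw [Finset.union_comm, ← Finset.insert_eq, Finset.card_insert_of_notMem hαS]
    have : 1 ≤ S.card := Finset.one_le_card.2 hne
    omega
  · refine Finset.union_subset (hS.trans (Finset.Icc_subset_Icc le_rfl (Nat.sub_le α 1))) ?_
    simp only [Finset.singleton_subset_iff, Finset.mem_Icc]
    omega

/-- Validity of the vertex `x_R` for `R ⊆ {1, …, α-1}` with `|R| ≥ 2`. -/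
lemma aValid_x_low (α : ℕ) (R : Finset ℕ) (hR : R ⊆ Finset.Icc 1 (α - 1))
    (hcard : 2 ≤ R.card) : AValid α (AV.x R) :=
  ⟨hcard, hR.trans (Finset.Icc_subset_Icc le_rfl (Nat.sub_le α 1))⟩

/-! If `x_R ∉ C`, then `d_α, x_{T ∪ {α}}, x_R, d_S` is a path in `A_α - C` (the two
middle vertices differ because `α ∉ R`). This contradicts `C` being a cut once we know
`d_α ∉ C`, which holds by minimality: removing any vertex of `C` other than `d_α` leaves a
set containing `d_α`, and such a set is trivially a cut. -/

section Cut

variable {V : Type*} {G : SimpleGraph V} {A B C : Set V}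

lemma isCut_of_subset (h : A ⊆ C) : IsCut G A B C :=
  fun a _ ha _ _ => a.2 (h ha)

lemma IsMinimalCut.notMem_of_ne_singleton {a : V} (hC : IsMinimalCut G {a} B C)
    (hne : C ≠ {a}) : a ∉ C := by
  intro ha
  obtain ⟨y, hy, hya⟩ : ∃ y ∈ C, y ≠ a := by
    by_contra! h
    exact hne (Set.eq_singleton_iff_unique_mem.2 ⟨ha, h⟩)
  exact hC.2 y hy (isCut_of_subset (Set.singleton_subset_iff.2 ⟨ha, hya.symm⟩))

end Cut

section Agraph

variable {α : ℕ}

lemma agraph_adj_top_x {U : Finset ℕ} {hU : AValid α (AV.x U)} (h : α ∈ U) :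
    (Agraph α).Adj (dTop α) ⟨AV.x U, hU⟩ :=
  Or.inl h

lemma agraph_adj_x_x {U W : Finset ℕ} {hU : AValid α (AV.x U)} {hW : AValid α (AV.x W)}
    (hne : U ≠ W) (h : (U ∩ W).Nonempty) : (Agraph α).Adj ⟨AV.x U, hU⟩ ⟨AV.x W, hW⟩ :=
  Or.inl ⟨hne, h⟩

lemma agraph_adj_x_d {U S : Finset ℕ} {hU : AValid α (AV.x U)} {hS : AValid α (AV.d S)}
    (h : (U ∩ S).Nonempty) : (Agraph α).Adj ⟨AV.x U, hU⟩ ⟨AV.d S, hS⟩ :=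
  Or.inr (show (S ∩ U).Nonempty from Finset.inter_comm U S ▸ h)

end Agraph

/-- Let `C` be a minimal `d_α`-`D_α` cut in `A_α` with `C ≠ {d_α}`.  If `d_S ∉ C`
for a nonempty `S ⊆ {1, …, α-1}` and `x_{T ∪ {α}} ∉ C` for some nonempty
`T ⊆ {1, …, α-1}`, then `x_R ∈ C` for every `R ⊆ {1, …, α-1}` with `R ∩ S ≠ ∅`,
`R ∩ T ≠ ∅` and `|R| ≥ 2`. -/
theorem cut_x_mem (α : ℕ) (hα : 2 ≤ α) (C : Set {v : AV // AValid α v})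
    (hC : IsMinimalCut (Agraph α) {dTop α} (Dset α) C) (hCne : C ≠ {dTop α})
    (S : Finset ℕ) (hSne : S.Nonempty) (hS : S ⊆ Finset.Icc 1 (α - 1))
    (hdS : (⟨AV.d S, hSne, hS⟩ : {v : AV // AValid α v}) ∉ C)
    (T : Finset ℕ) (hTne : T.Nonempty) (hT : T ⊆ Finset.Icc 1 (α - 1))
    (hxT : (⟨AV.x (T ∪ {α}), aValid_x_union α hα T hT hTne⟩ :
      {v : AV // AValid α v}) ∉ C)
    (R : Finset ℕ) (hR : R ⊆ Finset.Icc 1 (α - 1)) (hRS : (R ∩ S).Nonempty)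
    (hRT : (R ∩ T).Nonempty) (hRcard : 2 ≤ R.card) :
    (⟨AV.x R, aValid_x_low α R hR hRcard⟩ : {v : AV // AValid α v}) ∈ C := by
  by_contra hxR
  have htop : dTop α ∉ C := hC.notMem_of_ne_singleton hCne
  have hαR : α ∉ R := fun h => by have := (Finset.mem_Icc.1 (hR h)).2; omega
  have hTR : T ∪ {α} ≠ R := fun h => hαR (h ▸ by simp)
  have hTR' : ((T ∪ {α}) ∩ R).Nonempty := by
    rw [Finset.inter_comm]
    exact hRT.mono (Finset.inter_subset_inter_left Finset.subset_union_left)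
  let H := (Agraph α).induce Cᶜ
  have h₁ : H.Adj ⟨dTop α, htop⟩ ⟨_, hxT⟩ := agraph_adj_top_x (by simp)
  have h₂ : H.Adj ⟨_, hxT⟩ ⟨_, hxR⟩ := agraph_adj_x_x hTR hTR'
  have h₃ : H.Adj ⟨_, hxR⟩ ⟨_, hdS⟩ := agraph_adj_x_d hRS
  exact hC.1 ⟨dTop α, htop⟩ ⟨_, hdS⟩ rfl ⟨S, rfl⟩
    (h₁.reachable.trans (h₂.reachable.trans h₃.reachable))
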